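/- arXiv:2002.08605 — 4 statements merged into one kernel-verified Lean document; each statement's English description precedes it below -/
import Mathlib

section
/- Let U ⊆ ℝ^K be the set {u | ∃ θ, ℓ(θ) ≤ u coordinatewise} for convex functions ℓ_k, let ũ ∈ ℝ^K, let θ⁺ minimize θ ↦ ½‖(ℓ(θ) − ũ)₊‖², and define u⁺ by u⁺_k = max(ũ_k, ℓ_k(θ⁺)). Then u⁺ is the Euclidean projection of ũ onto U, i.e., u⁺ ∈ U and u⁺ minimizes ‖u − ũ‖² over u ∈ U. -/
/-! For `u ∈ U` with witness `θ` we have `u ≥ ℓ(θ)`, so `|u_k - ũ_k| ≥ (ℓ_k(θ) - ũ_k)₊` in every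
coordinate, whence `‖u - ũ‖² ≥ ‖(ℓ(θ) - ũ)₊‖² ≥ ‖(ℓ(θ⁺) - ũ)₊‖²`; and the last quantity is exactly
`‖u⁺ - ũ‖²`, since `max(ũ_k, ℓ_k(θ⁺)) - ũ_k = (ℓ_k(θ⁺) - ũ_k)₊`. -/

lemma EuclideanSpace.norm_sub_sq_eq_sum {ι : Type*} [Fintype ι] (x y : EuclideanSpace ℝ ι) :
    ‖x - y‖ ^ 2 = ∑ i, (x i - y i) ^ 2 := by
  simp only [EuclideanSpace.norm_sq_eq, PiLp.sub_apply, Real.norm_eq_abs, sq_abs]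

lemma max_sub_self_left {α : Type*} [AddCommGroup α] [LinearOrder α] [IsOrderedAddMonoid α]
    (a b : α) : max a b - a = max (b - a) 0 := by
  rw [← max_sub_sub_right, sub_self, max_comm]

lemma sq_max_zero_le_sq_of_le {α : Type*} [Ring α] [LinearOrder α] [IsStrictOrderedRing α]
    {a b : α} (h : a ≤ b) : max a 0 ^ 2 ≤ b ^ 2 := by
  rw [← sq_abs b]
  exact pow_le_pow_left₀ (le_max_right _ _) (max_le (h.trans (le_abs_self b)) (abs_nonneg b)) 2

theorem exact_projection_characterization_general {d K : ℕ}
    (ℓ : Fin K → EuclideanSpace ℝ (Fin d) → ℝ)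
    (utld : EuclideanSpace ℝ (Fin K))
    (θp : EuclideanSpace ℝ (Fin d))
    (hmin : ∀ θ, (1/2) * ∑ k, (max (ℓ k θp - utld k) 0) ^ 2 ≤
                 (1/2) * ∑ k, (max (ℓ k θ - utld k) 0) ^ 2)
    (up : EuclideanSpace ℝ (Fin K))
    (hup : ∀ k, up k = max (utld k) (ℓ k θp)) :
    (∃ θ, ∀ k, ℓ k θ ≤ up k) ∧
      ∀ u : EuclideanSpace ℝ (Fin K), (∃ θ, ∀ k, ℓ k θ ≤ u k) →
        ‖up - utld‖ ^ 2 ≤ ‖u - utld‖ ^ 2 := by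
  refine ⟨⟨θp, fun k => (hup k).symm ▸ le_max_right _ _⟩, ?_⟩
  rintro u ⟨θ, hθ⟩
  calc ‖up - utld‖ ^ 2 = ∑ k, (max (ℓ k θp - utld k) 0) ^ 2 := by
        simp only [EuclideanSpace.norm_sub_sq_eq_sum, hup, max_sub_self_left]
    _ ≤ ∑ k, (max (ℓ k θ - utld k) 0) ^ 2 := by linarith [hmin θ]
    _ ≤ ∑ k, (u k - utld k) ^ 2 :=
        Finset.sum_le_sum fun k _ => sq_max_zero_le_sq_of_le (by linarith [hθ k])
    _ = ‖u - utld‖ ^ 2 := (EuclideanSpace.norm_sub_sq_eq_sum u utld).symm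

/-- If `θ⁺` minimizes `θ ↦ ½‖(ℓ(θ) − ũ)₊‖²` and `u⁺_k = max(ũ_k, ℓ_k(θ⁺))`,
then `u⁺` is the Euclidean projection of `ũ` onto `U = {u | ∃ θ, ℓ(θ) ≤ u}`:
`u⁺ ∈ U` and `u⁺` minimizes `‖u − ũ‖²` over `u ∈ U`. -/
theorem exact_projection_characterization {d K : ℕ}
    (ℓ : Fin K → EuclideanSpace ℝ (Fin d) → ℝ)
    (hconv : ∀ k, ConvexOn ℝ Set.univ (ℓ k))
    (hdiff : ∀ k, Differentiable ℝ (ℓ k))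
    (utld : EuclideanSpace ℝ (Fin K))
    (θp : EuclideanSpace ℝ (Fin d))
    (hmin : ∀ θ, (1/2) * ∑ k, (max (ℓ k θp - utld k) 0) ^ 2 ≤
                 (1/2) * ∑ k, (max (ℓ k θ - utld k) 0) ^ 2)
    (up : EuclideanSpace ℝ (Fin K))
    (hup : ∀ k, up k = max (utld k) (ℓ k θp)) :
    (∃ θ, ∀ k, ℓ k θ ≤ up k) ∧
      ∀ u : EuclideanSpace ℝ (Fin K), (∃ θ, ∀ k, ℓ k θ ≤ u k) →
        ‖up - utld‖ ^ 2 ≤ ‖u - utld‖ ^ 2 :=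
  exact_projection_characterization_general ℓ utld θp hmin up hup
end

section
/- Let ψ : ℝ^K → ℝ be monotone nondecreasing in each coordinate (u ≤ v coordinatewise implies ψ(u) ≤ ψ(v)). Let u⁺ be the Euclidean projection of ũ ∈ ℝ^K onto the convex set U = {u | ∃ θ, ℓ(θ) ≤ u}, and let θ' be any minimizer of θ ↦ ‖(ℓ(θ) − ũ)₊‖² with u' = ℓ(θ'). Then u' ∈ U, u' ≤ u⁺ coordinatewise, and ψ(u') ≤ ψ(u⁺). -/
/-! The surrogate point `v = max(ℓ(θ'), ũ)` lies in `U` and its distance to `ũ` is the minimal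
value of `θ ↦ ‖(ℓ(θ) − ũ)₊‖`, which is at most the distance from any point of `U` to `ũ`.
So `v` is a nearest point of `U` to `ũ`; since `U` is convex and the Euclidean norm is strictly
convex, the nearest point is unique, hence `v = u⁺` and `u' = ℓ(θ') ≤ v = u⁺`. -/

open Set

theorem eq_of_mem_of_norm_sub_le_of_forall_norm_sub_le {E : Type*} [NormedAddCommGroup E]
    [NormedSpace ℝ E] [StrictConvexSpace ℝ E] {s : Set E} (hs : Convex ℝ s) {x a b : E}
    (ha : a ∈ s) (hmin : ∀ w ∈ s, ‖a - x‖ ≤ ‖w - x‖) (hb : b ∈ s) (hba : ‖b - x‖ ≤ ‖a - x‖) :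
    b = a := by
  by_contra hne
  have hmid : (2⁻¹ : ℝ) • b + (2⁻¹ : ℝ) • a ∈ Metric.ball x ‖a - x‖ :=
    combo_mem_ball_of_ne (by rwa [Metric.mem_closedBall, dist_eq_norm])
      (by rw [Metric.mem_closedBall, dist_eq_norm]) hne (by norm_num) (by norm_num) (by norm_num)
  rw [Metric.mem_ball, dist_eq_norm] at hmid
  exact (hmin _ (hs hb ha (by norm_num) (by norm_num) (by norm_num))).not_gt hmid

section Profiles

variable {ι E : Type*}

def dominatingProfiles (ℓ : ι → E → ℝ) : Set (EuclideanSpace ℝ ι) :=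
  {u | ∃ θ, ∀ k, ℓ k θ ≤ u k}

theorem convex_dominatingProfiles [AddCommGroup E] [Module ℝ E] {ℓ : ι → E → ℝ}
    (hconv : ∀ k, ConvexOn ℝ univ (ℓ k)) : Convex ℝ (dominatingProfiles ℓ) := by
  rintro u ⟨θ, hθ⟩ v ⟨η, hη⟩ a b ha hb hab
  refine ⟨a • θ + b • η, fun k => ?_⟩
  calc ℓ k (a • θ + b • η) ≤ a * ℓ k θ + b * ℓ k η :=
        (hconv k).2 (mem_univ θ) (mem_univ η) ha hb hab
    _ ≤ a * u k + b * v k := by gcongr <;> [exact hθ k; exact hη k]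
    _ = (a • u + b • v) k := rfl

variable [Fintype ι]

theorem sum_sq_max_sub_le_norm_sub_sq {y : ι → ℝ} {u x : EuclideanSpace ℝ ι}
    (hyu : ∀ k, y k ≤ u k) : ∑ k, max (y k - x k) 0 ^ 2 ≤ ‖u - x‖ ^ 2 := by
  rw [EuclideanSpace.real_norm_sq_eq]
  refine Finset.sum_le_sum fun k _ => ?_
  rw [← sq_abs ((u - x) k)]
  exact pow_le_pow_left₀ (le_max_right _ _)
    (max_le ((sub_le_sub_right (hyu k) _).trans (le_abs_self _)) (abs_nonneg _)) 2

theorem norm_toLp_max_sub_sq (y : ι → ℝ) (x : EuclideanSpace ℝ ι) :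
    ‖WithLp.toLp 2 (fun k => max (y k) (x k)) - x‖ ^ 2 = ∑ k, max (y k - x k) 0 ^ 2 := by
  rw [EuclideanSpace.real_norm_sq_eq]
  refine Finset.sum_congr rfl fun k _ => ?_
  rw [PiLp.sub_apply, ← max_sub_sub_right, sub_self]

end Profiles

theorem overconstrained_projection_general {d K : ℕ}
    (ℓ : Fin K → EuclideanSpace ℝ (Fin d) → ℝ)
    (hconv : ∀ k, ConvexOn ℝ Set.univ (ℓ k))
    (ψ : EuclideanSpace ℝ (Fin K) → ℝ)
    (hmono : ∀ u v : EuclideanSpace ℝ (Fin K), (∀ k, u k ≤ v k) → ψ u ≤ ψ v)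
    (utld up : EuclideanSpace ℝ (Fin K))
    (hupU : ∃ θ, ∀ k, ℓ k θ ≤ up k)
    (hproj : ∀ u : EuclideanSpace ℝ (Fin K), (∃ θ, ∀ k, ℓ k θ ≤ u k) →
      ‖up - utld‖ ≤ ‖u - utld‖)
    (θ' : EuclideanSpace ℝ (Fin d))
    (hmin : ∀ θ, ∑ k, (max (ℓ k θ' - utld k) 0) ^ 2 ≤
                 ∑ k, (max (ℓ k θ - utld k) 0) ^ 2)
    (u' : EuclideanSpace ℝ (Fin K)) (hu' : ∀ k, u' k = ℓ k θ') :
    (∃ θ, ∀ k, ℓ k θ ≤ u' k) ∧ (∀ k, u' k ≤ up k) ∧ ψ u' ≤ ψ up := by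
  obtain ⟨θ₀, hθ₀⟩ := hupU
  set v : EuclideanSpace ℝ (Fin K) := WithLp.toLp 2 (fun k => max (ℓ k θ') (utld k))
  have hvU : v ∈ dominatingProfiles ℓ := ⟨θ', fun k => le_max_left _ _⟩
  have hv_le : ‖v - utld‖ ≤ ‖up - utld‖ := by
    refine (pow_le_pow_iff_left₀ (norm_nonneg _) (norm_nonneg _) two_ne_zero).1 ?_
    calc ‖v - utld‖ ^ 2 = ∑ k, max (ℓ k θ' - utld k) 0 ^ 2 := norm_toLp_max_sub_sq _ _
      _ ≤ ∑ k, max (ℓ k θ₀ - utld k) 0 ^ 2 := hmin θ₀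
      _ ≤ ‖up - utld‖ ^ 2 := sum_sq_max_sub_le_norm_sub_sq hθ₀
  have hv_eq : v = up :=
    eq_of_mem_of_norm_sub_le_of_forall_norm_sub_le (convex_dominatingProfiles hconv) ⟨θ₀, hθ₀⟩
      hproj hvU hv_le
  have hle : ∀ k, u' k ≤ up k := fun k => hu' k ▸ hv_eq ▸ le_max_left _ _
  exact ⟨⟨θ', fun k => (hu' k).ge⟩, hle, hmono u' up hle⟩

/-- Lemma 1, over-constrained projection: for monotone `ψ`, the exact
projection `u⁺` of `ũ` onto `U = {u | ∃ θ, ℓ(θ) ≤ u}`, and any minimizer `θ'` of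
`θ ↦ ‖(ℓ(θ) − ũ)₊‖²` with `u' = ℓ(θ')`, one has `u' ∈ U`, `u' ≤ u⁺` coordinatewise,
and `ψ(u') ≤ ψ(u⁺)`. -/
theorem overconstrained_projection {d K : ℕ}
    (ℓ : Fin K → EuclideanSpace ℝ (Fin d) → ℝ)
    (hconv : ∀ k, ConvexOn ℝ Set.univ (ℓ k))
    (hdiff : ∀ k, Differentiable ℝ (ℓ k))
    (ψ : EuclideanSpace ℝ (Fin K) → ℝ)
    (hmono : ∀ u v : EuclideanSpace ℝ (Fin K), (∀ k, u k ≤ v k) → ψ u ≤ ψ v)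
    (utld up : EuclideanSpace ℝ (Fin K))
    (hupU : ∃ θ, ∀ k, ℓ k θ ≤ up k)
    (hproj : ∀ u : EuclideanSpace ℝ (Fin K), (∃ θ, ∀ k, ℓ k θ ≤ u k) →
      ‖up - utld‖ ≤ ‖u - utld‖)
    (θ' : EuclideanSpace ℝ (Fin d))
    (hmin : ∀ θ, ∑ k, (max (ℓ k θ' - utld k) 0) ^ 2 ≤
                 ∑ k, (max (ℓ k θ - utld k) 0) ^ 2)
    (u' : EuclideanSpace ℝ (Fin K)) (hu' : ∀ k, u' k = ℓ k θ') :
    (∃ θ, ∀ k, ℓ k θ ≤ u' k) ∧ (∀ k, u' k ≤ up k) ∧ ψ u' ≤ ψ up :=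
  overconstrained_projection_general ℓ hconv ψ hmono utld up hupU hproj θ' hmin u' hu'
end

section
/- Let ℓ_k : ℝ^d → ℝ for k = 1, …, K each be γ-smooth (gradient γ-Lipschitz), Φ-Lipschitz, with ‖ℓ(θ)‖ ≤ G for all θ, and let ũ ∈ ℝ^K satisfy |ℓ_k(θ₀) − ũ_k| ≤ G + c for a fixed θ₀ and constant c ≥ 0 and all k. Then Q(θ) := Σ_k (ℓ_k(θ) − ũ_k)₊² has a Lipschitz gradient on the region where |ℓ_k(θ) − ũ_k| ≤ G + c, with Lipschitz constant at most 2K((G + c)γ + Φ²). -/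
/-!
Since `w ↦ (w)₊²` is `C¹` with derivative `2 (w)₊`, the chain rule gives
`∇Q(θ) = Σ_k 2 (ℓ_k(θ) − ũ_k)₊ ∇ℓ_k(θ)`. Each summand is a product of a scalar bounded by
`G + c` and `Φ`-Lipschitz in `θ` with a vector that is `γ`-Lipschitz and bounded by `Φ`, so
`a u − b v = a (u − v) + (a − b) v` bounds its variation by `2 ((G + c) γ + Φ²) ‖θ₁ − θ₂‖`;
summing over the `K` terms gives the constant.
-/

open Asymptotics Topology InnerProductSpace

theorem hasDerivAt_max_zero_sq (z : ℝ) :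
    HasDerivAt (fun w : ℝ => max w 0 ^ 2) (2 * max z 0) z := by
  rcases lt_trichotomy z 0 with hz | rfl | hz
  · have hloc : (fun w : ℝ => max w 0 ^ 2) =ᶠ[𝓝 z] fun _ => 0 := by
      filter_upwards [Iio_mem_nhds hz] with w hw
      simp [max_eq_right (Set.mem_Iio.mp hw).le]
    simpa [max_eq_right hz.le] using (hasDerivAt_const z (0 : ℝ)).congr_of_eventuallyEq hloc
  · -- at the kink the function is squeezed by `w ^ 2`, which is `o(w)`
    have hsq : (fun w : ℝ => max w 0 ^ 2) =O[𝓝 0] fun w => w ^ 2 :=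
      isBigO_of_le _ fun w => by
        have habs : |max w 0| ≤ |w| := by simpa using abs_max_sub_max_le_abs w 0 0
        simpa only [Real.norm_eq_abs, abs_pow] using pow_le_pow_left₀ (abs_nonneg _) habs 2
    rw [hasDerivAt_iff_isLittleO]
    simpa using hsq.trans_isLittleO (isLittleO_pow_id one_lt_two)
  · have hloc : (fun w : ℝ => max w 0 ^ 2) =ᶠ[𝓝 z] fun w => w ^ 2 := by
      filter_upwards [Ioi_mem_nhds hz] with w hw
      simp [max_eq_left (Set.mem_Ioi.mp hw).le]
    simpa [max_eq_left hz.le, mul_comm] using (hasDerivAt_pow 2 z).congr_of_eventuallyEq hloc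

section Gradient

variable {E : Type*} [NormedAddCommGroup E] [InnerProductSpace ℝ E] [CompleteSpace E]
  {f : E → ℝ} {f' x : E}

theorem HasGradientAt.sub_const (hf : HasGradientAt f f' x) (c : ℝ) :
    HasGradientAt (fun y => f y - c) f' x :=
  hf.hasFDerivAt.sub_const c

theorem HasGradientAt.max_zero_sq (hf : HasGradientAt f f' x) :
    HasGradientAt (fun y => max (f y) 0 ^ 2) ((2 * max (f x) 0) • f') x := by
  rw [hasGradientAt_iff_hasFDerivAt, map_smul]
  exact (hasDerivAt_max_zero_sq (f x)).comp_hasFDerivAt x hf.hasFDerivAt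

theorem HasGradientAt.fun_sum {ι : Type*} (s : Finset ι) {g : ι → E → ℝ} {g' : ι → E}
    (h : ∀ i ∈ s, HasGradientAt (g i) (g' i) x) :
    HasGradientAt (fun y => ∑ i ∈ s, g i y) (∑ i ∈ s, g' i) x := by
  rw [hasGradientAt_iff_hasFDerivAt, map_sum]
  exact HasFDerivAt.fun_sum fun i hi => (h i hi).hasFDerivAt

theorem norm_gradient_le_of_lipschitz {Φ : ℝ} (hΦ : 0 ≤ Φ)
    (hlip : ∀ y, |f y - f x| ≤ Φ * ‖y - x‖) : ‖gradient f x‖ ≤ Φ := by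
  rw [gradient, LinearIsometryEquiv.norm_map (toDual ℝ E).symm]
  exact norm_fderiv_le_of_lip' ℝ hΦ <| .of_forall fun y => by
    simpa only [Real.norm_eq_abs] using hlip y

end Gradient

theorem norm_smul_sub_smul_le {E : Type*} [SeminormedAddCommGroup E] [NormedSpace ℝ E]
    (a b : ℝ) (u v : E) : ‖a • u - b • v‖ ≤ |a| * ‖u - v‖ + |a - b| * ‖v‖ := by
  calc ‖a • u - b • v‖ = ‖a • (u - v) + (a - b) • v‖ := by
        rw [smul_sub, sub_smul]; abel_nf
    _ ≤ |a| * ‖u - v‖ + |a - b| * ‖v‖ := by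
        simpa only [norm_smul, Real.norm_eq_abs] using norm_add_le (a • (u - v)) ((a - b) • v)

theorem norm_two_mul_max_zero_smul_sub_le {E : Type*} [SeminormedAddCommGroup E]
    [NormedSpace ℝ E] {a b B γ Φ r : ℝ} {u v : E} (ha : |a| ≤ B) (hab : |a - b| ≤ Φ * r)
    (huv : ‖u - v‖ ≤ γ * r) (hv : ‖v‖ ≤ Φ) :
    ‖(2 * max a 0) • u - (2 * max b 0) • v‖ ≤ 2 * (B * γ + Φ ^ 2) * r := by
  have hB : 0 ≤ B := (abs_nonneg a).trans ha
  have hΦr : 0 ≤ Φ * r := (abs_nonneg _).trans hab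
  have hmax : |max a 0| ≤ B := by
    simpa using (abs_max_sub_max_le_abs a 0 0).trans (by simpa using ha)
  have hdiff : |max a 0 - max b 0| ≤ Φ * r := (abs_max_sub_max_le_abs a b 0).trans hab
  calc ‖(2 * max a 0) • u - (2 * max b 0) • v‖
      ≤ |2 * max a 0| * ‖u - v‖ + |2 * max a 0 - 2 * max b 0| * ‖v‖ :=
        norm_smul_sub_smul_le _ _ u v
    _ = 2 * (|max a 0| * ‖u - v‖ + |max a 0 - max b 0| * ‖v‖) := by
        rw [← mul_sub, abs_mul, abs_mul, abs_two]; ring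
    _ ≤ 2 * (B * (γ * r) + Φ * r * Φ) := by gcongr
    _ = 2 * (B * γ + Φ ^ 2) * r := by ring

theorem clipped_penalty_smooth_general {d K : ℕ}
    (ℓ : Fin K → EuclideanSpace ℝ (Fin d) → ℝ)
    (γ Φ G c : ℝ) (hΦ : 0 ≤ Φ)
    (hdiff : ∀ k, Differentiable ℝ (ℓ k))
    (hsmooth : ∀ k x y, ‖gradient (ℓ k) x - gradient (ℓ k) y‖ ≤ γ * ‖x - y‖)
    (hlip : ∀ k x y, |ℓ k x - ℓ k y| ≤ Φ * ‖x - y‖)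
    (utld : Fin K → ℝ)
    (Q : EuclideanSpace ℝ (Fin d) → ℝ)
    (hQ : ∀ θ, Q θ = ∑ k, (max (ℓ k θ - utld k) 0) ^ 2) :
    ∀ θ₁ θ₂, (∀ k, |ℓ k θ₁ - utld k| ≤ G + c) → (∀ k, |ℓ k θ₂ - utld k| ≤ G + c) →
      ‖gradient Q θ₁ - gradient Q θ₂‖ ≤ 2 * K * ((G + c) * γ + Φ ^ 2) * ‖θ₁ - θ₂‖ := by
  intro θ₁ θ₂ h₁ _
  have hgradQ (θ) : gradient Q θ = ∑ k, (2 * max (ℓ k θ - utld k) 0) • gradient (ℓ k) θ := by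
    rw [show Q = _ from funext hQ]
    exact (HasGradientAt.fun_sum Finset.univ fun k _ =>
      ((hdiff k θ).hasGradientAt.sub_const (utld k)).max_zero_sq).gradient
  rw [hgradQ, hgradQ, ← Finset.sum_sub_distrib]
  calc _ ≤ ∑ _k : Fin K, 2 * ((G + c) * γ + Φ ^ 2) * ‖θ₁ - θ₂‖ :=
        norm_sum_le_of_le _ fun k _ => norm_two_mul_max_zero_smul_sub_le (h₁ k)
          (by rw [sub_sub_sub_cancel_right]; exact hlip k θ₁ θ₂) (hsmooth k θ₁ θ₂)
          (norm_gradient_le_of_lipschitz hΦ fun y => hlip k y θ₂)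
    _ = 2 * K * ((G + c) * γ + Φ ^ 2) * ‖θ₁ - θ₂‖ := by
        rw [Finset.sum_const, Finset.card_univ, Fintype.card_fin, nsmul_eq_mul]; ring

/-- for γ-smooth, Φ-Lipschitz surrogates with `‖ℓ(θ)‖ ≤ G`, and `ũ` with
`|ℓ_k(θ₀) − ũ_k| ≤ G + c`, the function `Q(θ) = Σ_k (ℓ_k(θ) − ũ_k)₊²` has a Lipschitz
gradient on the region where `|ℓ_k(θ) − ũ_k| ≤ G + c`, with constant `2K((G + c)γ + Φ²)`. -/
theorem clipped_penalty_smooth {d K : ℕ}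
    (ℓ : Fin K → EuclideanSpace ℝ (Fin d) → ℝ)
    (γ Φ G c : ℝ) (hγ : 0 ≤ γ) (hΦ : 0 ≤ Φ) (hG : 0 ≤ G) (hc : 0 ≤ c)
    (hdiff : ∀ k, Differentiable ℝ (ℓ k))
    (hsmooth : ∀ k x y, ‖gradient (ℓ k) x - gradient (ℓ k) y‖ ≤ γ * ‖x - y‖)
    (hlip : ∀ k x y, |ℓ k x - ℓ k y| ≤ Φ * ‖x - y‖)
    (hbound : ∀ θ, Real.sqrt (∑ k, (ℓ k θ) ^ 2) ≤ G)
    (utld : Fin K → ℝ) (θ₀ : EuclideanSpace ℝ (Fin d))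
    (hθ₀ : ∀ k, |ℓ k θ₀ - utld k| ≤ G + c)
    (Q : EuclideanSpace ℝ (Fin d) → ℝ)
    (hQ : ∀ θ, Q θ = ∑ k, (max (ℓ k θ - utld k) 0) ^ 2) :
    ∀ θ₁ θ₂, (∀ k, |ℓ k θ₁ - utld k| ≤ G + c) → (∀ k, |ℓ k θ₂ - utld k| ≤ G + c) →
      ‖gradient Q θ₁ - gradient Q θ₂‖ ≤ 2 * K * ((G + c) * γ + Φ ^ 2) * ‖θ₁ - θ₂‖ :=
  clipped_penalty_smooth_general ℓ γ Φ G c hΦ hdiff hsmooth hlip utld Q hQ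
end

section
/- Let U ⊆ ℝ^K be closed convex, u ∈ U, η > 0, α ≥ 0, and g ∈ ℝ^K. Let ũ⁺ ∈ U be an α/η-approximate minimizer over U of F(z) = ⟨g, z⟩ + (1/(2η))‖z − u‖², and define the approximate gradient mapping P̃(u, g) = (u − ũ⁺)/η. Then ⟨g, P̃(u, g)⟩ ≥ (3/4)‖P̃(u, g)‖² − 2α/η². -/
/-! The exact minimizer `v` of `F` over `U` is the projection of `u - η • g` onto `U`; its
variational inequality, plugged into the exact quadratic expansion of `F` around `v`, gives
`F v + ‖z - v‖² / (2η) ≤ F z` on `U`. Taking `z = ũ⁺` yields `‖ũ⁺ - v‖² ≤ 2α`; taking `z = u`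
and using `F ũ⁺ ≤ F v + α/η` bounds `⟨g, u - ũ⁺⟩` below by
`(‖u - ũ⁺‖² + ‖u - v‖²)/(2η) - α/η`, and `‖u - ũ⁺‖² ≤ 2‖u - v‖² + 2‖ũ⁺ - v‖²` concludes. -/

open scoped RealInnerProductSpace

theorem norm_add_sq_le {E : Type*} [SeminormedAddCommGroup E] (a b : E) :
    ‖a + b‖ ^ 2 ≤ 2 * (‖a‖ ^ 2 + ‖b‖ ^ 2) :=
  (pow_le_pow_left₀ (norm_nonneg _) (norm_add_le a b) 2).trans add_sq_le

section ProxObjective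

variable {E : Type*} [NormedAddCommGroup E] [InnerProductSpace ℝ E]

noncomputable def proxObjective (g u : E) (η : ℝ) (z : E) : ℝ :=
  ⟪g, z⟫ + (1 / (2 * η)) * ‖z - u‖ ^ 2

theorem proxObjective_eq_add_inner_add_sq (g u : E) (η : ℝ) (v z : E) :
    proxObjective g u η z =
      proxObjective g u η v + ⟪g + η⁻¹ • (v - u), z - v⟫ + (1 / (2 * η)) * ‖z - v‖ ^ 2 := by
  have hsplit : ‖z - u‖ ^ 2 = ‖z - v‖ ^ 2 + 2 * ⟪z - v, v - u⟫ + ‖v - u‖ ^ 2 := by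
    rw [← norm_add_sq_real, sub_add_sub_cancel]
  simp only [proxObjective, hsplit, inner_add_left, inner_sub_right, real_inner_smul_left,
    inner_sub_left]
  rw [real_inner_comm v z, real_inner_comm u z, real_inner_comm u v]
  ring

theorem exists_proxObjective_add_sq_le {U : Set E} (hUcomplete : IsComplete U)
    (hUconv : Convex ℝ U) (hUne : U.Nonempty) (g u : E) {η : ℝ} (hη : 0 < η) :
    ∃ v ∈ U, ∀ z ∈ U,
      proxObjective g u η v + (1 / (2 * η)) * ‖z - v‖ ^ 2 ≤ proxObjective g u η z := by
  obtain ⟨v, hvU, hvmin⟩ :=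
    exists_norm_eq_iInf_of_complete_convex hUne hUcomplete hUconv (u - η • g)
  refine ⟨v, hvU, fun z hz => ?_⟩
  have hproj := (norm_eq_iInf_iff_real_inner_le_zero hUconv hvU).mp hvmin z hz
  have hgrad : u - η • g - v = -η • (g + η⁻¹ • (v - u)) := by
    rw [smul_add, smul_smul, neg_mul, mul_inv_cancel₀ hη.ne', neg_one_smul, neg_smul]
    abel
  have hvi : 0 ≤ ⟪g + η⁻¹ • (v - u), z - v⟫ := by
    rw [hgrad, real_inner_smul_left] at hproj
    nlinarith
  rw [proxObjective_eq_add_inner_add_sq g u η v z]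
  linarith

theorem le_inner_sub_of_proxObjective_le_add {U : Set E} {g u v w : E} {η ε : ℝ} (hη : 0 < η)
    (hu : u ∈ U) (hv : v ∈ U)
    (hvmin : ∀ z ∈ U,
      proxObjective g u η v + (1 / (2 * η)) * ‖z - v‖ ^ 2 ≤ proxObjective g u η z)
    (hw : w ∈ U) (hwapprox : ∀ z ∈ U, proxObjective g u η w ≤ proxObjective g u η z + ε) :
    3 / (4 * η) * ‖u - w‖ ^ 2 - 2 * ε ≤ ⟪g, u - w⟫ := by
  have hwv : ‖w - v‖ ^ 2 ≤ 2 * η * ε := by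
    have := le_of_add_le_add_left ((hvmin w hw).trans (hwapprox v hv))
    rwa [one_div, inv_mul_le_iff₀ (by positivity)] at this
  have hvu := hvmin u hu
  have hwv' := hwapprox v hv
  have htri : ‖u - w‖ ^ 2 ≤ 2 * (‖u - v‖ ^ 2 + ‖w - v‖ ^ 2) := by
    simpa [norm_sub_rev w v] using norm_add_sq_le (u - v) (v - w)
  simp only [proxObjective, sub_self, norm_zero] at hvu hwv'
  -- the argument only gives slack `3ε/2`; the stated `2ε` dominates it because `ε ≥ 0`
  have hε : 0 ≤ ε := nonneg_of_mul_nonneg_right ((sq_nonneg _).trans hwv) (by positivity)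
  rw [norm_sub_rev v u] at hvu hwv'
  rw [norm_sub_rev w u] at hwv'
  rw [inner_sub_right]
  have e1 : 3 / (4 * η) = 3 / 2 * (1 / (2 * η)) := by field_simp; ring
  have e2 : 1 / (2 * η) * (2 * η * ε) = ε := by field_simp
  have hc : 0 ≤ 1 / (2 * η) := by positivity
  rw [e1]
  linarith [mul_le_mul_of_nonneg_left htri hc, mul_le_mul_of_nonneg_left hwv hc]

end ProxObjective

theorem approx_gradient_mapping_inner_bound_general {K : ℕ}
    (U : Set (EuclideanSpace ℝ (Fin K))) (hUclosed : IsClosed U) (hUconv : Convex ℝ U)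
    (u : EuclideanSpace ℝ (Fin K)) (hu : u ∈ U)
    (η α : ℝ) (hη : 0 < η)
    (g : EuclideanSpace ℝ (Fin K))
    (F : EuclideanSpace ℝ (Fin K) → ℝ)
    (hF : ∀ z, F z = ⟪g, z⟫ + (1 / (2 * η)) * ‖z - u‖ ^ 2)
    (utldp : EuclideanSpace ℝ (Fin K)) (hutldp : utldp ∈ U)
    (happrox : ∀ z ∈ U, F utldp ≤ F z + α / η) :
    ⟪g, η⁻¹ • (u - utldp)⟫ ≥ (3 / 4) * ‖η⁻¹ • (u - utldp)‖ ^ 2 - 2 * α / η ^ 2 := by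
  have hFprox : F = proxObjective g u η := funext hF
  subst hFprox
  obtain ⟨v, hvU, hvmin⟩ :=
    exists_proxObjective_add_sq_le hUclosed.isComplete hUconv ⟨u, hu⟩ g u hη
  have key := le_inner_sub_of_proxObjective_le_add hη hu hvU hvmin hutldp happrox
  rw [real_inner_smul_right, norm_smul, Real.norm_of_nonneg (inv_nonneg.2 hη.le), mul_pow]
  refine le_of_eq_of_le ?_ (mul_le_mul_of_nonneg_left key (inv_nonneg.2 hη.le))
  field_simp

/-- for an `α/η`-approximate minimizer `ũ⁺ ∈ U` of
`F(z) = ⟨g, z⟩ + (1/(2η))‖z − u‖²` over the closed convex set `U`, the approximate gradient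
mapping `P̃(u, g) = (u − ũ⁺)/η` satisfies `⟨g, P̃(u, g)⟩ ≥ (3/4)‖P̃(u, g)‖² − 2α/η²`. -/
theorem approx_gradient_mapping_inner_bound {K : ℕ}
    (U : Set (EuclideanSpace ℝ (Fin K))) (hUclosed : IsClosed U) (hUconv : Convex ℝ U)
    (u : EuclideanSpace ℝ (Fin K)) (hu : u ∈ U)
    (η α : ℝ) (hη : 0 < η) (hα : 0 ≤ α)
    (g : EuclideanSpace ℝ (Fin K))
    (F : EuclideanSpace ℝ (Fin K) → ℝ)
    (hF : ∀ z, F z = ⟪g, z⟫ + (1 / (2 * η)) * ‖z - u‖ ^ 2)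
    (utldp : EuclideanSpace ℝ (Fin K)) (hutldp : utldp ∈ U)
    (happrox : ∀ z ∈ U, F utldp ≤ F z + α / η) :
    ⟪g, η⁻¹ • (u - utldp)⟫ ≥ (3 / 4) * ‖η⁻¹ • (u - utldp)‖ ^ 2 - 2 * α / η ^ 2 :=
  approx_gradient_mapping_inner_bound_general U hUclosed hUconv u hu η α hη g F hF utldp hutldp
    happrox
end
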